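/- arXiv:1707.08393 — 2 statements merged into one kernel-verified Lean document; each statement's English description precedes it below -/
import Mathlib

section
/- For every function f : I → ℂ of bounded variation and every n ≥ 0: (i) var(U^n f) ≤ (1/(N+1)^n)·var(f), and (ii) sup_{s ∈ I} | (U^n f)(s) − ∫_I f dG_N | ≤ (1/(N+1)^n)·var(f). -/
open MeasureTheory Set Filter
open scoped Classical Topology ENNReal

/-- The invariant (Gauss-type) measure `G_N(A) = (1/log((N+1)/N)) ∫_A dx/(x+N)` on `I = [0,1]`. -/
noncomputable def GN (N : ℕ) : Measure ℝ :=
  (volume.restrict (Icc (0:ℝ) 1)).withDensity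
    (fun x => ENNReal.ofReal ((Real.log ((N+1)/N))⁻¹ * (x + N)⁻¹))

/-- The transition (Perron–Frobenius) operator
`(Uf)(s) = Σ_{i ≥ N} V_{N,i}(s) f(N/(s+i))` with `V_{N,i}(s) = (s+N)/((s+i)(s+i+1))`,
the sum over integers `i ≥ N` being indexed by `i = N + k`, `k : ℕ`. -/
noncomputable def Uop (N : ℕ) (f : ℝ → ℂ) (s : ℝ) : ℂ :=
  ∑' k : ℕ, (((s + N) / ((s + ((N + k : ℕ) : ℝ)) * (s + ((N + k : ℕ) : ℝ) + 1)) : ℝ) : ℂ)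
      * f ((N : ℝ) / (s + ((N + k : ℕ) : ℝ)))

/-!
Write `Uf(s) = ∑ₖ Vₖ(s) f(gₖ(s))` with the decreasing branches `gₖ(s) = N/(s+N+k)` and the
weights `Vₖ = wₖ - wₖ₊₁`, where `wₖ(s) = (s+N)/(s+N+k)`. The tails `wₖ(s)` increase with `s`, so by
Abel summation `U` turns increasing functions into decreasing ones. If `φ(x)` is the variation of
`f` on `[0, x]`, then `‖f y - f x‖ ≤ φ y - φ x` for `x ≤ y`; testing against functionals of norm
at most one (Hahn–Banach) this domination passes through `U`, giving
`var (Uf) ≤ Uφ(0) - Uφ(1)`. Since `gₖ₊₁(0) = gₖ(1)`, one has `(N+1) Uφ(0) = φ(1) + N Uφ(1)`,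
and `Uφ(1) ≥ φ(0)` then yields `Uφ(0) - Uφ(1) ≤ (φ(1) - φ(0))/(N+1) = var f/(N+1)`.

For the second estimate, `G_N` is `U`-invariant: substituting `y = gₖ(x)` on each branch, the
images `gₖ[0,1)` tile `(0,1]`. Hence `∫ f dG_N = ∫ Uⁿf dG_N`, which differs from `Uⁿf(s)` by at
most `var (Uⁿf)`.
-/

lemma nonneg_of_hasSum_sub_mul_of_antitone {d a : ℕ → ℝ} {S : ℝ} (hd0 : d 0 = 0)
    (hd : ∀ k, d k ≤ 0) (ha : Antitone a) (hlim : Tendsto (fun n => d n * a n) atTop (𝓝 0))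
    (hS : HasSum (fun k => (d k - d (k + 1)) * a k) S) : 0 ≤ S := by
  have hpartial (n : ℕ) : ∑ k ∈ Finset.range n, (d k - d (k + 1)) * a k
      = ∑ k ∈ Finset.range n, d (k + 1) * (a (k + 1) - a k) - d n * a n := by
    induction n with
    | zero => simp [hd0]
    | succ n ih => rw [Finset.sum_range_succ, Finset.sum_range_succ, ih]; ring
  refine neg_zero (G := ℝ) ▸ le_of_tendsto_of_tendsto' hlim.neg hS.tendsto_sum_nat fun n => ?_
  rw [hpartial, le_sub_iff_add_le, neg_add_cancel]
  exact Finset.sum_nonneg fun k _ =>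
    mul_nonneg_of_nonpos_of_nonpos (hd _) (sub_nonpos.2 (ha k.le_succ))

theorem MonotoneOn.norm_le_max_of_mem_Icc {α : Type*} [Preorder α] {φ : α → ℝ} {a b x : α}
    (hφ : MonotoneOn φ (Icc a b)) (hx : x ∈ Icc a b) : ‖φ x‖ ≤ max |φ a| |φ b| :=
  abs_le_max_abs_abs (hφ ⟨le_rfl, hx.1.trans hx.2⟩ hx hx.1) (hφ hx ⟨hx.1.trans hx.2, le_rfl⟩ hx.2)

section Domination

variable {α E : Type*} [LinearOrder α] [NormedAddCommGroup E] {f : α → E} {φ : α → ℝ}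
  {S : Set α}

def DominatedOn (f : α → E) (φ : α → ℝ) (S : Set α) : Prop :=
  ∀ ⦃x⦄, x ∈ S → ∀ ⦃y⦄, y ∈ S → x ≤ y → ‖f y - f x‖ ≤ φ y - φ x

lemma LocallyBoundedVariationOn.dominatedOn (hf : LocallyBoundedVariationOn f S) {a : α}
    (ha : a ∈ S) : DominatedOn f (variationOnFromTo f S a) S := by
  intro x hx y hy hxy
  rw [← variationOnFromTo.add hf ha hx hy, add_sub_cancel_left,
    variationOnFromTo.eq_of_le f S hxy, ← dist_eq_norm, dist_edist]
  exact ENNReal.toReal_mono (hf x y hx hy)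
    (eVariationOn.edist_le f ⟨hy, hxy, le_rfl⟩ ⟨hx, le_rfl, hxy⟩)

lemma DominatedOn.monotoneOn (h : DominatedOn f φ S) : MonotoneOn φ S :=
  fun _ hx _ hy hxy => sub_nonneg.1 ((norm_nonneg _).trans (h hx hy hxy))

lemma DominatedOn.norm_le {a b x : α} (h : DominatedOn f φ (Icc a b)) (hx : x ∈ Icc a b) :
    ‖f x‖ ≤ ‖f a‖ + (φ b - φ a) := by
  have ha : a ∈ Icc a b := ⟨le_rfl, hx.1.trans hx.2⟩
  have hb : b ∈ Icc a b := ⟨hx.1.trans hx.2, le_rfl⟩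
  have := h ha hx hx.1
  have := h.monotoneOn hx hb hx.2
  linarith [norm_le_insert' (f x) (f a)]

lemma dominatedOn_iff_forall_monotoneOn [NormedSpace ℝ E] :
    DominatedOn f φ S ↔ ∀ ℓ : E →L[ℝ] ℝ, ‖ℓ‖ ≤ 1 → MonotoneOn (fun x => φ x - ℓ (f x)) S := by
  refine ⟨fun h ℓ hℓ x hx y hy hxy => ?_, fun h x hx y hy hxy => ?_⟩
  · have hℓz : ℓ (f y - f x) ≤ ‖f y - f x‖ :=
      (Real.le_norm_self _).trans ((ℓ.le_of_opNorm_le hℓ _).trans_eq (one_mul _))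
    have := h hx hy hxy
    rw [map_sub] at hℓz
    linarith
  · obtain ⟨ℓ, hℓ, hℓz⟩ := exists_dual_vector'' ℝ (f y - f x)
    have : φ x - ℓ (f x) ≤ φ y - ℓ (f y) := h ℓ hℓ hx hy hxy
    rw [map_sub, RCLike.ofReal_real_eq_id, id] at hℓz
    linarith

lemma eVariationOn_le_of_edist_le {F : Type*} [PseudoEMetricSpace F] {g : α → F}
    (h : ∀ ⦃x⦄, x ∈ S → ∀ ⦃y⦄, y ∈ S → x ≤ y → edist (f y) (f x) ≤ edist (g y) (g x)) :
    eVariationOn f S ≤ eVariationOn g S :=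
  iSup_le fun ⟨_, _, hu, huS⟩ => (Finset.sum_le_sum fun i _ =>
    h (huS i) (huS (i + 1)) (hu i.le_succ)).trans (eVariationOn.sum_le hu huS)

lemma DominatedOn.eVariationOn_le (h : DominatedOn f φ S) {a b : α} (ha : a ∈ S) (hb : b ∈ S) :
    eVariationOn f (S ∩ Icc a b) ≤ ENNReal.ofReal (φ b - φ a) := by
  refine (eVariationOn_le_of_edist_le (g := φ) fun x hx y hy hxy => ?_).trans
    (h.monotoneOn.eVariationOn_eq ha hb).le
  rw [edist_dist, edist_dist, dist_eq_norm, Real.dist_eq,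
    abs_of_nonneg (sub_nonneg.2 (h.monotoneOn hx.1 hy.1 hxy))]
  exact ENNReal.ofReal_le_ofReal (h hx.1 hy.1 hxy)

end Domination

theorem integral_tsum_abs_deriv_smul_comp {ι E : Type*} [Countable ι] [NormedAddCommGroup E]
    [NormedSpace ℝ E] [CompleteSpace E] {s : Set ℝ} (hs : MeasurableSet s) {g g' : ι → ℝ → ℝ}
    (hg' : ∀ i, ∀ x ∈ s, HasDerivWithinAt (g i) (g' i x) s x) (hinj : ∀ i, InjOn (g i) s)
    (hdisj : Pairwise (Function.onFun Disjoint fun i => g i '' s)) {F : ℝ → E}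
    (hF : IntegrableOn F (⋃ i, g i '' s)) :
    ∫ x in s, ∑' i, |g' i x| • F (g i x) = ∫ y in ⋃ i, g i '' s, F y := by
  have hmeas (i : ι) : MeasurableSet (g i '' s) :=
    hs.image_of_continuousOn_injOn (fun x hx => (hg' i x hx).continuousWithinAt) (hinj i)
  have hcov (i : ι) (G : ℝ → E) : ∫ y in g i '' s, G y = ∫ x in s, |g' i x| • G (g i x) :=
    integral_image_eq_integral_abs_deriv_smul hs (hg' i) (hinj i) G
  have hint (i : ι) : Integrable (fun x => |g' i x| • F (g i x)) (volume.restrict s) :=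
    (integrableOn_image_iff_integrableOn_abs_deriv_smul hs (hg' i) (hinj i) F).1
      (hF.mono_set (subset_iUnion (fun i => g i '' s) i))
  have hnorm (i : ι) : ∫ x in s, ‖|g' i x| • F (g i x)‖ = ∫ y in g i '' s, ‖F y‖ := by
    simp only [integral_image_eq_integral_abs_deriv_smul hs (hg' i) (hinj i), norm_smul,
      Real.norm_eq_abs, abs_abs, smul_eq_mul]
  rw [← integral_tsum_of_summable_integral_norm hint
    (by simpa only [hnorm] using (hasSum_integral_iUnion hmeas hdisj hF.norm).summable)]
  simpa only [hcov] using (hasSum_integral_iUnion hmeas hdisj hF).tsum_eq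

theorem BoundedVariationOn.aemeasurable_restrict {μ : Measure ℝ} {g : ℝ → ℝ} {s : Set ℝ}
    (hg : BoundedVariationOn g s) (hs : MeasurableSet s) : AEMeasurable g (μ.restrict s) := by
  obtain ⟨p, q, hp, hq, rfl⟩ := hg.locallyBoundedVariationOn.exists_monotoneOn_sub_monotoneOn
  exact (aemeasurable_restrict_of_monotoneOn hs hp).sub (aemeasurable_restrict_of_monotoneOn hs hq)

theorem BoundedVariationOn.integrableOn_Icc {𝕜 : Type*} [RCLike 𝕜] {f : ℝ → 𝕜} {a b : ℝ}
    (hf : BoundedVariationOn f (Icc a b)) : IntegrableOn f (Icc a b) := by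
  have hre := (RCLike.reCLM.lipschitz.comp_boundedVariationOn hf).aemeasurable_restrict
    (μ := volume) measurableSet_Icc
  have him := (RCLike.imCLM.lipschitz.comp_boundedVariationOn hf).aemeasurable_restrict
    (μ := volume) measurableSet_Icc
  refine Integrable.mono' (g := fun _ => ‖f a‖ + (eVariationOn f (Icc a b)).toReal)
    (integrableOn_const measure_Icc_lt_top.ne)
    (aemeasurable_of_re_im hre him).aestronglyMeasurable ?_
  filter_upwards [ae_restrict_mem measurableSet_Icc] with x hx
  have hdist := hf.dist_le hx ⟨le_rfl, hx.1.trans hx.2⟩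
  rw [dist_eq_norm] at hdist
  linarith [norm_le_insert' (f x) (f a)]

theorem norm_sub_integral_le_eVariationOn {α E : Type*} [LinearOrder α] [MeasurableSpace α]
    [NormedAddCommGroup E] [NormedSpace ℝ E] [CompleteSpace E] {μ : Measure α}
    [IsProbabilityMeasure μ] {S : Set α} {g : α → E} (hμ : ∀ᵐ x ∂μ, x ∈ S)
    (hg : BoundedVariationOn g S) (hgi : Integrable g μ) {s : α} (hs : s ∈ S) :
    ‖g s - ∫ x, g x ∂μ‖ ≤ (eVariationOn g S).toReal := by
  have hmean : g s - ∫ x, g x ∂μ = ∫ x, (g s - g x) ∂μ := by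
    rw [integral_sub (integrable_const _) hgi, integral_const, probReal_univ, one_smul]
  rw [hmean]
  refine (norm_integral_le_of_norm_le_const ?_).trans_eq (by rw [probReal_univ, mul_one])
  filter_upwards [hμ] with x hx
  rw [← dist_eq_norm]
  exact hg.dist_le hs hx

namespace GaussKuzmin

noncomputable def branch (N k : ℕ) (s : ℝ) : ℝ := N / (s + N + k)

noncomputable def weight (N k : ℕ) (s : ℝ) : ℝ := (s + N) / ((s + N + k) * (s + N + k + 1))

-- `tailWeight N k s = ∑_{j ≥ k} weight N j s`, see `weight_eq_tailWeight_sub`.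
noncomputable def tailWeight (N k : ℕ) (s : ℝ) : ℝ := (s + N) / (s + N + k)

variable {N : ℕ} {s t : ℝ}

lemma add_natCast_pos (hN : 1 ≤ N) (hs : 0 ≤ s) : 0 < s + N := by
  linarith [Nat.one_le_cast (α := ℝ).2 hN]

lemma add_natCast_add_natCast_pos (hN : 1 ≤ N) (hs : 0 ≤ s) (k : ℕ) : 0 < s + N + k :=
  (add_natCast_pos hN hs).trans_le (le_add_of_nonneg_right k.cast_nonneg)

lemma weight_eq_tailWeight_sub (hN : 1 ≤ N) (hs : 0 ≤ s) (k : ℕ) :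
    weight N k s = tailWeight N k s - tailWeight N (k + 1) s := by
  have h₁ := add_natCast_add_natCast_pos hN hs k
  have h₂ := add_natCast_add_natCast_pos hN hs (k + 1)
  rw [weight, tailWeight, tailWeight]
  push_cast at h₂ ⊢
  field_simp
  ring

lemma tailWeight_zero (hN : 1 ≤ N) (hs : 0 ≤ s) : tailWeight N 0 s = 1 := by
  simpa [tailWeight] using div_self (add_natCast_pos hN hs).ne'

lemma tailWeight_le_tailWeight (hN : 1 ≤ N) (hs : 0 ≤ s) (hst : s ≤ t) (k : ℕ) :
    tailWeight N k s ≤ tailWeight N k t := by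
  rw [tailWeight, tailWeight, div_le_div_iff₀ (add_natCast_add_natCast_pos hN hs k)
    (add_natCast_add_natCast_pos hN (hs.trans hst) k)]
  nlinarith [k.cast_nonneg (α := ℝ)]

lemma tendsto_tailWeight (s : ℝ) : Tendsto (fun k => tailWeight N k s) atTop (𝓝 0) :=
  tendsto_const_nhds.div_atTop (tendsto_atTop_add_const_left _ _ tendsto_natCast_atTop_atTop)

lemma weight_nonneg (hN : 1 ≤ N) (hs : 0 ≤ s) (k : ℕ) : 0 ≤ weight N k s := by
  have := add_natCast_add_natCast_pos hN hs k
  have := add_natCast_pos hN hs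
  unfold weight
  positivity

lemma hasSum_weight (hN : 1 ≤ N) (hs : 0 ≤ s) : HasSum (fun k => weight N k s) 1 := by
  rw [hasSum_iff_tendsto_nat_of_nonneg (weight_nonneg hN hs)]
  have hsum (n : ℕ) : ∑ k ∈ Finset.range n, weight N k s = 1 - tailWeight N n s := by
    simp only [weight_eq_tailWeight_sub hN hs, Finset.sum_range_sub', tailWeight_zero hN hs]
  simpa [hsum] using (tendsto_tailWeight s).const_sub 1

lemma branch_mem_Icc (hN : 1 ≤ N) (hs : 0 ≤ s) (k : ℕ) : branch N k s ∈ Icc (0 : ℝ) 1 := by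
  have := add_natCast_add_natCast_pos hN hs k
  refine ⟨div_nonneg N.cast_nonneg this.le, (div_le_one this).2 ?_⟩
  linarith [k.cast_nonneg (α := ℝ)]

lemma branch_antitone (hN : 1 ≤ N) (hs : 0 ≤ s) : Antitone fun k => branch N k s :=
  fun k l hkl => div_le_div_of_nonneg_left N.cast_nonneg (add_natCast_add_natCast_pos hN hs k)
    (by gcongr)

lemma branch_le_branch (hN : 1 ≤ N) (hs : 0 ≤ s) (hst : s ≤ t) (k : ℕ) :
    branch N k t ≤ branch N k s :=
  div_le_div_of_nonneg_left N.cast_nonneg (add_natCast_add_natCast_pos hN hs k) (by linarith)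

lemma branch_succ_zero (k : ℕ) : branch N (k + 1) 0 = branch N k 1 := by
  simp only [branch]
  push_cast
  ring_nf

lemma branch_zero_zero (hN : 1 ≤ N) : branch N 0 0 = 1 := by
  simpa [branch] using div_self (add_natCast_pos hN le_rfl).ne'

lemma weight_zero_zero (hN : 1 ≤ N) : weight N 0 0 = ((N : ℝ) + 1)⁻¹ := by
  have := add_natCast_pos hN le_rfl
  simp only [weight, Nat.cast_zero, zero_add, add_zero] at this ⊢
  field_simp

lemma weight_succ_zero (k : ℕ) :
    weight N (k + 1) 0 = (N : ℝ) / (N + 1) * weight N k 1 := by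
  simp only [weight]
  push_cast
  field_simp
  ring

lemma continuousOn_inv_add (hN : 1 ≤ N) : ContinuousOn (fun x : ℝ => (x + N)⁻¹) (Icc 0 1) :=
  (continuousOn_id.add continuousOn_const).inv₀ fun _ hx => (add_natCast_pos hN hx.1).ne'

lemma hasDerivAt_branch (hN : 1 ≤ N) {x : ℝ} (hx : 0 ≤ x) (k : ℕ) :
    HasDerivAt (branch N k) (-(N : ℝ) / (x + N + k) ^ 2) x := by
  have h := (hasDerivAt_const x (N : ℝ)).fun_div
    (((hasDerivAt_id' x).add_const (N : ℝ)).add_const (k : ℝ)) (add_natCast_add_natCast_pos hN hx k).ne'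
  rw [show branch N k = fun y => (N : ℝ) / (y + N + k) from rfl]
  simpa [neg_div] using h

lemma branch_injOn (hN : 1 ≤ N) (k : ℕ) : InjOn (branch N k) (Ico 0 1) :=
  StrictAntiOn.injOn fun x hx _ _ hxy =>
    div_lt_div_of_pos_left (Nat.cast_pos.2 hN) (add_natCast_add_natCast_pos hN hx.1 k) (by linarith)

lemma pairwise_disjoint_image_branch (hN : 1 ≤ N) :
    Pairwise (Function.onFun Disjoint fun k => branch N k '' Ico 0 1) := by
  intro i j hij
  rw [Function.onFun, Set.disjoint_left]
  rintro _ ⟨x, hx, rfl⟩ ⟨y, hy, hxy⟩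
  simp only [branch, div_eq_mul_inv] at hxy
  have hden : y + N + j = x + N + i := inv_injective (mul_left_cancel₀ (Nat.cast_pos.2 hN).ne' hxy)
  have hij' : i < j + 1 := by exact_mod_cast (show (i : ℝ) < j + 1 by linarith [hx.1, hy.2])
  have hji' : j < i + 1 := by exact_mod_cast (show (j : ℝ) < i + 1 by linarith [hx.2, hy.1])
  omega

lemma iUnion_image_branch (hN : 1 ≤ N) : ⋃ k, branch N k '' Ico 0 1 = Ioc 0 1 := by
  ext y
  simp only [mem_iUnion, mem_image]
  constructor
  · rintro ⟨k, x, hx, rfl⟩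
    exact ⟨div_pos (Nat.cast_pos.2 hN) (add_natCast_add_natCast_pos hN hx.1 k),
      (branch_mem_Icc hN hx.1 k).2⟩
  · rintro ⟨hy0, hy1⟩
    -- `y = N / r` lies on the branch `⌊r⌋₊ - N`, at the point `r - ⌊r⌋₊`.
    set r := (N : ℝ) / y
    have hNr : N ≤ ⌊r⌋₊ := Nat.le_floor (le_div_self N.cast_nonneg hy0 hy1)
    refine ⟨⌊r⌋₊ - N, r - ⌊r⌋₊,
      ⟨sub_nonneg.2 (Nat.floor_le (by positivity)), by linarith [Nat.lt_floor_add_one r]⟩, ?_⟩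
    rw [branch, Nat.cast_sub hNr, show r - ⌊r⌋₊ + N + (⌊r⌋₊ - N) = r by ring]
    exact div_div_cancel₀ (Nat.cast_pos.2 hN).ne'

section Operator

variable {E : Type*} [NormedAddCommGroup E] [NormedSpace ℝ E]

-- `Uop` (see `Uop_eq_op`), extended to functions with values in any real normed space so that it
-- also acts on real-valued majorants.
noncomputable def op (N : ℕ) (f : ℝ → E) (s : ℝ) : E :=
  ∑' k, weight N k s • f (branch N k s)

lemma Uop_eq_op (N : ℕ) : Uop N = op N := by
  funext f s
  simp only [Uop, op, weight, branch, Complex.real_smul, Nat.cast_add, add_assoc]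

lemma inv_add_smul_op (hN : 1 ≤ N) {x : ℝ} (hx : 0 ≤ x) (f : ℝ → E) :
    (x + N)⁻¹ • op N f x =
      ∑' k : ℕ, |-(N : ℝ) / (x + N + k) ^ 2| • ((branch N k x + N)⁻¹ • f (branch N k x)) := by
  rw [op, ← tsum_const_smul'']
  congr 1 with k
  rw [smul_smul, smul_smul]
  congr 1
  have := add_natCast_add_natCast_pos hN hx k
  have := add_natCast_pos hN hx
  rw [abs_div, abs_neg, abs_of_nonneg N.cast_nonneg, abs_of_nonneg (sq_nonneg _), weight, branch]
  field_simp
  ring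

variable [CompleteSpace E] {f : ℝ → E} {M : ℝ}

lemma summable_weight_smul (hN : 1 ≤ N) (hs : 0 ≤ s) {a : ℕ → E} (ha : ∀ k, ‖a k‖ ≤ M) :
    Summable fun k => weight N k s • a k :=
  ((hasSum_weight hN hs).summable.mul_right M).of_norm_bounded fun k => by
    rw [norm_smul, Real.norm_of_nonneg (weight_nonneg hN hs k)]
    exact mul_le_mul_of_nonneg_left (ha k) (weight_nonneg hN hs k)

lemma summable_op (hN : 1 ≤ N) (hs : s ∈ Icc (0 : ℝ) 1)
    (hf : ∀ x ∈ Icc (0 : ℝ) 1, ‖f x‖ ≤ M) : Summable fun k => weight N k s • f (branch N k s) :=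
  summable_weight_smul hN hs.1 fun k => hf _ (branch_mem_Icc hN hs.1 k)

lemma op_sub_clm_apply (hN : 1 ≤ N) (hs : s ∈ Icc (0 : ℝ) 1) {φ : ℝ → ℝ} {A : ℝ}
    (hφ : ∀ x ∈ Icc (0 : ℝ) 1, ‖φ x‖ ≤ A) (hf : ∀ x ∈ Icc (0 : ℝ) 1, ‖f x‖ ≤ M)
    (ℓ : E →L[ℝ] ℝ) : op N (fun x => φ x - ℓ (f x)) s = op N φ s - ℓ (op N f s) := by
  rw [op, op, op, ℓ.map_tsum (summable_op hN hs hf),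
    ← (summable_op hN hs hφ).tsum_sub ((summable_op hN hs hf).mapL ℓ)]
  simp only [smul_sub, map_smul]

lemma op_zero (hN : 1 ≤ N) (hf : ∀ x ∈ Icc (0 : ℝ) 1, ‖f x‖ ≤ M) :
    op N f 0 = ((N : ℝ) + 1)⁻¹ • (f 1 + (N : ℝ) • op N f 1) := by
  rw [op, (summable_op hN ⟨le_rfl, zero_le_one⟩ hf).tsum_eq_zero_add]
  simp only [weight_succ_zero, branch_succ_zero, branch_zero_zero hN, weight_zero_zero hN,
    mul_smul, tsum_const_smul'']
  rw [op, smul_add, smul_smul]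
  congr 2
  field_simp

lemma le_op_of_monotoneOn (hN : 1 ≤ N) {φ : ℝ → ℝ} (hφ : MonotoneOn φ (Icc 0 1))
    (hs : s ∈ Icc (0 : ℝ) 1) : φ 0 ≤ op N φ s := by
  have h0 : (0 : ℝ) ∈ Icc 0 1 := ⟨le_rfl, zero_le_one⟩
  calc φ 0 = ∑' k, weight N k s * φ 0 := by
        rw [tsum_mul_right, (hasSum_weight hN hs.1).tsum_eq, one_mul]
    _ ≤ op N φ s :=
      Summable.tsum_le_tsum (fun k => mul_le_mul_of_nonneg_left
          (hφ h0 (branch_mem_Icc hN hs.1 k) (branch_mem_Icc hN hs.1 k).1) (weight_nonneg hN hs.1 k))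
        ((hasSum_weight hN hs.1).summable.mul_right _)
        (summable_op hN hs fun _ => hφ.norm_le_max_of_mem_Icc)

lemma antitoneOn_op (hN : 1 ≤ N) {φ : ℝ → ℝ} (hφ : MonotoneOn φ (Icc 0 1)) :
    AntitoneOn (op N φ) (Icc 0 1) := by
  intro s hs t ht hst
  set a := fun k => φ (branch N k s)
  have hbound (k : ℕ) : ‖a k‖ ≤ max |φ 0| |φ 1| :=
    hφ.norm_le_max_of_mem_Icc (branch_mem_Icc hN hs.1 k)
  have hsum_s : Summable fun k => weight N k s * a k := summable_weight_smul hN hs.1 hbound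
  have hsum_t : Summable fun k => weight N k t * a k := summable_weight_smul hN ht.1 hbound
  have hbranch : op N φ t ≤ ∑' k, weight N k t * a k :=
    Summable.tsum_le_tsum (fun k => mul_le_mul_of_nonneg_left
        (hφ (branch_mem_Icc hN ht.1 k) (branch_mem_Icc hN hs.1 k) (branch_le_branch hN hs.1 hst k))
        (weight_nonneg hN ht.1 k))
      (summable_op hN ht fun _ => hφ.norm_le_max_of_mem_Icc) hsum_t
  -- The weights at `t` have larger tails than those at `s`, and `a` is antitone.
  have hweight : 0 ≤ op N φ s - ∑' k, weight N k t * a k := by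
    set d := fun k => tailWeight N k s - tailWeight N k t
    refine nonneg_of_hasSum_sub_mul_of_antitone (d := d) (a := a) ?_ (fun k => ?_)
      (fun k l hkl => ?_) ?_ ?_
    · simp [d, tailWeight_zero hN hs.1, tailWeight_zero hN ht.1]
    · exact sub_nonpos.2 (tailWeight_le_tailWeight hN hs.1 hst k)
    · exact hφ (branch_mem_Icc hN hs.1 l) (branch_mem_Icc hN hs.1 k)
        (branch_antitone hN hs.1 hkl)
    · refine Tendsto.zero_mul_isBoundedUnder_le ?_ (isBoundedUnder_of ⟨_, hbound⟩)
      simpa using (tendsto_tailWeight s).sub (tendsto_tailWeight t)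
    · have hd (k : ℕ) : (d k - d (k + 1)) * a k = weight N k s * a k - weight N k t * a k := by
        simp only [d, weight_eq_tailWeight_sub hN hs.1, weight_eq_tailWeight_sub hN ht.1]
        ring
      simp only [hd]
      exact hsum_s.hasSum.sub hsum_t.hasSum
  linarith

lemma op_zero_sub_op_one_le (hN : 1 ≤ N) {φ : ℝ → ℝ} (hφ : MonotoneOn φ (Icc 0 1)) :
    op N φ 0 - op N φ 1 ≤ (φ 1 - φ 0) / (N + 1) := by
  have hle := le_op_of_monotoneOn hN hφ (s := 1) ⟨zero_le_one, le_rfl⟩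
  rw [op_zero hN fun _ => hφ.norm_le_max_of_mem_Icc, smul_eq_mul, smul_eq_mul]
  have : (0 : ℝ) < N + 1 := by positivity
  rw [le_div_iff₀ this]
  field_simp
  linarith

lemma dominatedOn_op (hN : 1 ≤ N) {φ : ℝ → ℝ} (h : DominatedOn f φ (Icc 0 1)) :
    DominatedOn (op N f) (fun s => -op N φ s) (Icc 0 1) := by
  have hf := fun x (hx : x ∈ Icc (0 : ℝ) 1) => h.norm_le hx
  have hφ := fun x (hx : x ∈ Icc (0 : ℝ) 1) => h.monotoneOn.norm_le_max_of_mem_Icc hx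
  rw [dominatedOn_iff_forall_monotoneOn] at h ⊢
  intro ℓ hℓ s hs t ht hst
  have := antitoneOn_op hN (h (-ℓ) (by rwa [norm_neg])) hs ht hst
  rw [op_sub_clm_apply hN hs hφ hf, op_sub_clm_apply hN ht hφ hf] at this
  simp only [neg_apply] at this ⊢
  linarith

lemma eVariationOn_op_le (hN : 1 ≤ N) (hf : BoundedVariationOn f (Icc 0 1)) :
    eVariationOn (op N f) (Icc 0 1) ≤ ((N : ℝ≥0∞) + 1)⁻¹ * eVariationOn f (Icc 0 1) := by
  have h0 : (0 : ℝ) ∈ Icc 0 1 := ⟨le_rfl, zero_le_one⟩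
  have h1 : (1 : ℝ) ∈ Icc 0 1 := ⟨zero_le_one, le_rfl⟩
  set φ := variationOnFromTo f (Icc 0 1) 0
  have hφ : DominatedOn f φ (Icc 0 1) := hf.locallyBoundedVariationOn.dominatedOn h0
  have hvar : φ 1 - φ 0 = (eVariationOn f (Icc 0 1)).toReal := by
    simp [φ, variationOnFromTo.self, variationOnFromTo.eq_of_le f _ zero_le_one]
  calc eVariationOn (op N f) (Icc 0 1) = eVariationOn (op N f) (Icc 0 1 ∩ Icc 0 1) := by
        rw [inter_self]
    _ ≤ ENNReal.ofReal (-op N φ 1 - -op N φ 0) := (dominatedOn_op hN hφ).eVariationOn_le h0 h1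
    _ ≤ ENNReal.ofReal ((eVariationOn f (Icc 0 1)).toReal / (N + 1)) := by
        rw [← hvar]
        exact ENNReal.ofReal_le_ofReal (by linarith [op_zero_sub_op_one_le hN hφ.monotoneOn])
    _ = ((N : ℝ≥0∞) + 1)⁻¹ * eVariationOn f (Icc 0 1) := by
        have hN1 : ENNReal.ofReal ((N : ℝ) + 1) = (N : ℝ≥0∞) + 1 := by
          exact_mod_cast ENNReal.ofReal_natCast (N + 1)
        rw [ENNReal.ofReal_div_of_pos (by positivity), ENNReal.ofReal_toReal hf, hN1,
          ENNReal.div_eq_inv_mul]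

lemma integral_inv_add_smul_op (hN : 1 ≤ N) {f : ℝ → E} (hf : IntegrableOn f (Icc 0 1)) :
    ∫ x in Icc (0 : ℝ) 1, (x + N)⁻¹ • op N f x = ∫ x in Icc (0 : ℝ) 1, (x + N)⁻¹ • f x := by
  have hF : IntegrableOn (fun y : ℝ => (y + N)⁻¹ • f y) (Icc (0 : ℝ) 1) :=
    hf.continuousOn_smul (continuousOn_inv_add hN) isCompact_Icc
  rw [integral_Icc_eq_integral_Ico, setIntegral_congr_fun measurableSet_Ico
      fun x hx => inv_add_smul_op hN hx.1 f,
    integral_tsum_abs_deriv_smul_comp measurableSet_Ico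
      (fun k x hx => (hasDerivAt_branch hN hx.1 k).hasDerivWithinAt) (branch_injOn hN)
      (pairwise_disjoint_image_branch hN) (F := fun y => (y + N)⁻¹ • f y),
    iUnion_image_branch hN, integral_Icc_eq_integral_Ioc]
  rw [iUnion_image_branch hN]
  exact hF.mono_set Ioc_subset_Icc_self

end Operator

lemma eVariationOn_op_iterate_le (hN : 1 ≤ N) {f : ℝ → ℂ} (hf : BoundedVariationOn f (Icc 0 1))
    (n : ℕ) : eVariationOn ((op N)^[n] f) (Icc 0 1) ≤
      (((N : ℝ≥0∞) + 1) ^ n)⁻¹ * eVariationOn f (Icc 0 1) := by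
  induction n with
  | zero => simp
  | succ n ih =>
    have hbv : BoundedVariationOn ((op N)^[n] f) (Icc 0 1) :=
      ne_top_of_le_ne_top (ENNReal.mul_ne_top (by simp) hf) ih
    rw [Function.iterate_succ_apply', pow_succ', ENNReal.mul_inv (by simp) (by simp), mul_assoc]
    exact (eVariationOn_op_le hN hbv).trans (by gcongr)

section Measure

noncomputable def gaussDensity (N : ℕ) (x : ℝ) : ℝ := (Real.log ((N + 1) / N))⁻¹ * (x + N)⁻¹

lemma GN_eq (N : ℕ) :
    GN N = (volume.restrict (Icc 0 1)).withDensity fun x => ENNReal.ofReal (gaussDensity N x) :=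
  rfl

lemma gaussDensity_nonneg (hN : 1 ≤ N) {x : ℝ} (hx : 0 ≤ x) : 0 ≤ gaussDensity N x := by
  have hlog : 0 ≤ Real.log ((N + 1) / N) :=
    Real.log_nonneg ((le_div_iff₀ (Nat.cast_pos.2 hN)).2 (by linarith))
  have := add_natCast_pos hN hx
  unfold gaussDensity
  positivity

lemma integral_gaussDensity (hN : 1 ≤ N) : ∫ x in Icc (0 : ℝ) 1, gaussDensity N x = 1 := by
  have hN0 : (0 : ℝ) < N := Nat.cast_pos.2 hN
  have hlog : Real.log ((N + 1) / N) ≠ 0 :=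
    (Real.log_pos ((lt_div_iff₀ hN0).2 (by linarith))).ne'
  have hinv : 0 ∉ uIcc (N : ℝ) (1 + N) := by
    rw [uIcc_of_le (by linarith)]
    exact fun h => hN0.not_ge h.1
  simp only [gaussDensity, integral_const_mul, integral_Icc_eq_integral_Ioc,
    ← intervalIntegral.integral_of_le zero_le_one, intervalIntegral.integral_comp_add_right
    (fun x => x⁻¹), integral_inv hinv, zero_add]
  rw [add_comm 1, inv_mul_cancel₀ hlog]

lemma ae_mem_GN (N : ℕ) : ∀ᵐ x ∂GN N, x ∈ Icc (0 : ℝ) 1 :=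
  (withDensity_absolutelyContinuous _ _).ae_le (ae_restrict_mem measurableSet_Icc)

variable {E : Type*} [NormedAddCommGroup E] [NormedSpace ℝ E]

lemma measurable_ofReal_gaussDensity (N : ℕ) :
    Measurable fun x => ENNReal.ofReal (gaussDensity N x) := by
  unfold gaussDensity
  fun_prop

lemma integral_GN (hN : 1 ≤ N) (g : ℝ → E) :
    ∫ x, g x ∂GN N = ∫ x in Icc (0 : ℝ) 1, gaussDensity N x • g x := by
  rw [GN_eq, integral_withDensity_eq_integral_toReal_smul (measurable_ofReal_gaussDensity N)
    (ae_of_all _ fun _ => ENNReal.ofReal_lt_top)]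
  exact setIntegral_congr_fun measurableSet_Icc fun x hx => by
    simp only [ENNReal.toReal_ofReal (gaussDensity_nonneg hN hx.1)]

lemma isProbabilityMeasure_GN (hN : 1 ≤ N) : IsProbabilityMeasure (GN N) := by
  constructor
  have h := integral_GN hN fun _ => (1 : ℝ)
  simp only [integral_const, smul_eq_mul, mul_one, integral_gaussDensity hN] at h
  exact (ENNReal.toReal_eq_one_iff _).1 h

lemma integrable_GN (hN : 1 ≤ N) {f : ℝ → E} (hf : IntegrableOn f (Icc 0 1)) :
    Integrable f (GN N) := by
  rw [GN_eq, integrable_withDensity_iff_integrable_smul' (measurable_ofReal_gaussDensity N)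
    (ae_of_all _ fun _ => ENNReal.ofReal_lt_top)]
  refine (hf.continuousOn_smul (f := gaussDensity N)
    (continuousOn_const.mul (continuousOn_inv_add hN)) isCompact_Icc).congr ?_
  filter_upwards [ae_restrict_mem measurableSet_Icc] with x hx
  rw [ENNReal.toReal_ofReal (gaussDensity_nonneg hN hx.1)]

lemma integral_op_GN [CompleteSpace E] (hN : 1 ≤ N) {f : ℝ → E}
    (hf : IntegrableOn f (Icc 0 1)) : ∫ x, op N f x ∂GN N = ∫ x, f x ∂GN N := by
  simp only [integral_GN hN, gaussDensity, mul_smul, integral_smul, integral_inv_add_smul_op hN hf]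

end Measure

end GaussKuzmin

open GaussKuzmin

/-- For every function `f : I → ℂ` of bounded variation and every `n ≥ 0`:
(i) `var(Uⁿf) ≤ (1/(N+1)ⁿ) var(f)`, and
(ii) `sup_{s ∈ I} |(Uⁿf)(s) − ∫_I f dG_N| ≤ (1/(N+1)ⁿ) var(f)`. -/
theorem var_Uop_iterate (N : ℕ) (hN : 1 ≤ N) (f : ℝ → ℂ)
    (hf : eVariationOn f (Icc (0:ℝ) 1) ≠ ⊤) (n : ℕ) :
    eVariationOn ((Uop N)^[n] f) (Icc (0:ℝ) 1) ≤
        (((N : ℝ≥0∞) + 1) ^ n)⁻¹ * eVariationOn f (Icc (0:ℝ) 1) ∧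
      ∀ s ∈ Icc (0:ℝ) 1,
        ‖(Uop N)^[n] f s - ∫ x, f x ∂(GN N)‖ ≤
          (1 / ((N : ℝ) + 1) ^ n) * (eVariationOn f (Icc (0:ℝ) 1)).toReal := by
  rw [Uop_eq_op]
  have hvar := eVariationOn_op_iterate_le hN hf
  have hbv (m : ℕ) : BoundedVariationOn ((op N)^[m] f) (Icc 0 1) :=
    ne_top_of_le_ne_top (ENNReal.mul_ne_top (by simp) hf) (hvar m)
  have hinv (m : ℕ) : ∫ x, (op N)^[m] f x ∂GN N = ∫ x, f x ∂GN N := by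
    induction m with
    | zero => rfl
    | succ m ih => rw [Function.iterate_succ_apply', integral_op_GN hN (hbv m).integrableOn_Icc, ih]
  have := isProbabilityMeasure_GN hN
  refine ⟨hvar n, fun s hs => ?_⟩
  rw [← hinv n]
  refine (norm_sub_integral_le_eVariationOn (ae_mem_GN N) (hbv n)
    (integrable_GN hN (hbv n).integrableOn_Icc) hs).trans ?_
  have := ENNReal.toReal_mono (ENNReal.mul_ne_top (by simp) hf) (hvar n)
  have hN1 : ((N : ℝ≥0∞) + 1).toReal = N + 1 := by exact_mod_cast ENNReal.toReal_natCast (N + 1)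
  simpa [ENNReal.toReal_mul, ENNReal.toReal_inv, ENNReal.toReal_pow, hN1] using this
end

section
/- Define q̃_{−1}=0, q̃_0=1 and q̃_k = N(q̃_{k−1}+q̃_{k−2}) for k ≥ 1, and set v_{N(n)}(1) = (1+N)·N^{n+1}/(q̃_{n+1}·q̃_{n+2}). Then for every n ≥ 0, q̃_n = (1/√(N²+4N))·( ((N+√(N²+4N))/2)^{n+1} − ((N−√(N²+4N))/2)^{n+1} ), and lim_{n→∞} ((1/2)·v_{N(n)}(1))^{1/n} = 2/(N + √(N²+4N) + 2). -/
open MeasureTheory Set Filter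
open scoped Classical Topology ENNReal

/-- The sequence `q̃`, shifted: `qt N (k+1) = q̃_k` where `q̃_{-1}=0`, `q̃_0=1`,
`q̃_k = N(q̃_{k-1}+q̃_{k-2})`. -/
noncomputable def qt (N : ℕ) : ℕ → ℝ
  | 0 => 0
  | 1 => 1
  | (k+2) => (N : ℝ) * (qt N (k+1) + qt N k)

/-! `qt N n` is the Binet-type combination `(φⁿ - ψⁿ)/(φ - ψ)` of the roots `φ > |ψ|` of
`X² = N X + N`, so `qt N n ~ φⁿ/(φ - ψ)`. The quantity under the `n`-th root is therefore a
convergent factor times `(N/φ²)ⁿ`, and its `n`-th root tends to `N/φ² = 1/(φ + 1)`. -/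

theorem tendsto_mul_pow_rpow_inv {b : ℕ → ℝ} {c L : ℝ} (hb : Tendsto b atTop (𝓝 c))
    (hc : 0 < c) (hL : 0 ≤ L) :
    Tendsto (fun n : ℕ => (b n * L ^ n) ^ ((n : ℝ)⁻¹)) atTop (𝓝 L) := by
  have hroot : Tendsto (fun n : ℕ => b n ^ ((n : ℝ)⁻¹)) atTop (𝓝 1) := by
    simpa using hb.rpow tendsto_inv_atTop_nhds_zero_nat (Or.inl hc.ne')
  refine (by simpa using hroot.mul_const L : Tendsto _ atTop (𝓝 L)).congr' ?_
  filter_upwards [hb.eventually (lt_mem_nhds hc), eventually_ne_atTop 0] with n hbn hn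
  rw [Real.mul_rpow hbn.le (pow_nonneg hL n), Real.pow_rpow_inv_natCast hL hn]

section Binet

variable {N : ℕ} {φ ψ : ℝ}

theorem qt_eq_div_sub (hφ : φ ^ 2 = N * φ + N) (hψ : ψ ^ 2 = N * ψ + N) (hne : φ ≠ ψ)
    (n : ℕ) : qt N n = (φ ^ n - ψ ^ n) / (φ - ψ) := by
  have hsub : φ - ψ ≠ 0 := sub_ne_zero.2 hne
  induction n using Nat.twoStepInduction with
  | zero => simp [qt]
  | one => simp [qt, hsub]
  | more n ih ih' =>
    rw [qt, ih, ih', ← add_div, mul_div_assoc']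
    congr 1
    linear_combination (-φ ^ n) * hφ + ψ ^ n * hψ

theorem tendsto_qt_div_pow (hφ : φ ^ 2 = N * φ + N) (hψ : ψ ^ 2 = N * ψ + N) (hlt : |ψ| < φ) :
    Tendsto (fun n => qt N n / φ ^ n) atTop (𝓝 (φ - ψ)⁻¹) := by
  have hφ0 : 0 < φ := (abs_nonneg ψ).trans_lt hlt
  have hne : φ ≠ ψ := fun h => (le_abs_self ψ).not_gt (h ▸ hlt)
  have hratio : Tendsto (fun n : ℕ => (ψ / φ) ^ n) atTop (𝓝 0) :=
    tendsto_pow_atTop_nhds_zero_of_abs_lt_one <| by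
      rwa [abs_div, abs_of_pos hφ0, div_lt_one hφ0]
  have hlim := (hratio.const_sub 1).div_const (φ - ψ)
  rw [sub_zero, one_div] at hlim
  refine hlim.congr fun n => ?_
  rw [qt_eq_div_sub hφ hψ hne, div_pow]
  field_simp

theorem qt_rate_eq_mul_pow (hφ : φ ≠ 0) (n : ℕ) :
    (1 / 2) * ((1 + N) * (N : ℝ) ^ (n + 1) / (qt N (n + 2) * qt N (n + 3))) =
      (1 / 2) * (1 + N) * N / φ ^ 5 / (qt N (n + 2) / φ ^ (n + 2) * (qt N (n + 3) / φ ^ (n + 3)))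
        * (N / φ ^ 2) ^ n := by
  simp only [div_eq_mul_inv, mul_inv, inv_inv, mul_pow, inv_pow]
  field_simp
  ring

theorem tendsto_qt_rate (hN : 1 ≤ N) (hφ : φ ^ 2 = N * φ + N) (hψ : ψ ^ 2 = N * ψ + N)
    (hlt : |ψ| < φ) :
    Tendsto (fun n : ℕ =>
        ((1 / 2) * ((1 + N) * (N : ℝ) ^ (n + 1) / (qt N (n + 2) * qt N (n + 3)))) ^ ((n : ℝ)⁻¹))
      atTop (𝓝 (N / φ ^ 2)) := by
  have hφ0 : 0 < φ := (abs_nonneg ψ).trans_lt hlt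
  have hsub : 0 < φ - ψ := sub_pos.2 ((le_abs_self ψ).trans_lt hlt)
  have hN0 : (0 : ℝ) < N := by exact_mod_cast hN
  have hq := tendsto_qt_div_pow hφ hψ hlt
  have hb := (tendsto_const_nhds (x := (1 / 2) * (1 + N) * N / φ ^ 5)).div
    ((hq.comp (tendsto_add_atTop_nat 2)).mul (hq.comp (tendsto_add_atTop_nat 3)))
    (by positivity)
  simp only [qt_rate_eq_mul_pow hφ0.ne']
  exact tendsto_mul_pow_rpow_inv hb (by positivity) (by positivity)

end Binet

/-- Closed form for `q̃_n` and the limit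
`lim_{n→∞} ((1/2) v_{N(n)}(1))^{1/n} = 2/(N + √(N²+4N) + 2)`, where
`v_{N(n)}(1) = (1+N) N^{n+1}/(q̃_{n+1} q̃_{n+2})`. -/
theorem qt_closed_form_and_rate (N : ℕ) (hN : 1 ≤ N) :
    (∀ n : ℕ, qt N (n+1) =
        (Real.sqrt ((N : ℝ)^2 + 4*N))⁻¹ *
          ((((N : ℝ) + Real.sqrt ((N : ℝ)^2 + 4*N)) / 2) ^ (n+1)
            - (((N : ℝ) - Real.sqrt ((N : ℝ)^2 + 4*N)) / 2) ^ (n+1))) ∧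
    Tendsto
      (fun n : ℕ =>
        ((1/2) * ((1 + N) * (N : ℝ) ^ (n+1) / (qt N (n+2) * qt N (n+3)))) ^ ((n : ℝ)⁻¹))
      atTop (𝓝 (2 / ((N : ℝ) + Real.sqrt ((N : ℝ)^2 + 4*N) + 2))) := by
  have hN0 : (0 : ℝ) < N := by exact_mod_cast hN
  set D := Real.sqrt ((N : ℝ) ^ 2 + 4 * N)
  have hD : D ^ 2 = (N : ℝ) ^ 2 + 4 * N := Real.sq_sqrt (by positivity)
  have hDN : (N : ℝ) < D := by nlinarith [Real.sqrt_nonneg ((N : ℝ) ^ 2 + 4 * N)]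
  have hφ : ((N + D) / 2) ^ 2 = N * ((N + D) / 2) + N := by linear_combination hD / 4
  have hψ : ((N - D) / 2) ^ 2 = N * ((N - D) / 2) + N := by linear_combination hD / 4
  have hlt : |((N : ℝ) - D) / 2| < (N + D) / 2 := abs_lt.2 ⟨by linarith, by linarith⟩
  constructor
  · intro n
    rw [qt_eq_div_sub hφ hψ (by linarith), div_eq_inv_mul]
    ring_nf
  · convert tendsto_qt_rate hN hφ hψ hlt using 2
    rw [div_eq_div_iff (by positivity) (by positivity)]
    linear_combination hD / 2
end
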